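/- Let Y be a real, integrable random variable whose CDF F is continuous and strictly increasing with values in (0,1), and let α ∈ (0,1). Then (1/(1 − α)) · ∫_α^1 F⁻¹(γ) dγ = E[Y | Y > F⁻¹(α)], i.e., the expected shortfall at level α equals the conditional expectation of Y above its α-quantile. -/
import Mathlib


open MeasureTheory Set

/-- Expected shortfall representation: for an integrable random variable `Y` with
continuous, strictly increasing CDF `F` with values in `(0,1)`, inverse `Finv`,
and `α ∈ (0,1)`,
`(1/(1-α)) ∫_α^1 F⁻¹(γ) dγ = E[Y | Y > F⁻¹(α)] = E[Y 1{Y > F⁻¹(α)}]/P{Y > F⁻¹(α)}`. -/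
theorem expected_shortfall_eq_conditional_expectation
    {Ω : Type*} [MeasurableSpace Ω] (P : Measure Ω) [IsProbabilityMeasure P]
    (Y : Ω → ℝ) (hY : Measurable Y) (hYint : Integrable Y P)
    (F : ℝ → ℝ) (hF : ∀ x, F x = (P {ω | Y ω ≤ x}).toReal)
    (hFcont : Continuous F) (hFmono : StrictMono F)
    (hFrange : ∀ x, F x ∈ Ioo (0:ℝ) 1)
    (Finv : ℝ → ℝ) (hFinv : ∀ γ ∈ Ioo (0:ℝ) 1, F (Finv γ) = γ)
    (α : ℝ) (hα : α ∈ Ioo (0:ℝ) 1) :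
    (1 / (1 - α)) * ∫ γ in Ioo α 1, Finv γ
      = (∫ ω in {ω | Y ω > Finv α}, Y ω ∂P) / (P {ω | Y ω > Finv α}).toReal := by
  obtain ⟨hα0, hα1⟩ := hα
  have hFinvF : ∀ x, Finv (F x) = x := fun x =>
    hFmono.injective (hFinv (F x) (hFrange x))
  -- order relations
  have hlt : ∀ (x : ℝ) (γ : ℝ), γ ∈ Ioo (0:ℝ) 1 → (Finv γ < x ↔ γ < F x) := by
    intro x γ hγ
    rw [← hFmono.lt_iff_lt, hFinv γ hγ]
  have hle : ∀ (x : ℝ) (γ : ℝ), γ ∈ Ioo (0:ℝ) 1 → (x ≤ Finv γ ↔ F x ≤ γ) := by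
    intro x γ hγ
    rw [← hFmono.le_iff_le, hFinv γ hγ]
  have PIic : ∀ x, P {ω | Y ω ≤ x} = ENNReal.ofReal (F x) := by
    intro x
    rw [hF x, ENNReal.ofReal_toReal (measure_ne_top P _)]
  have hmeasY : MeasurableSet {ω | Y ω ≤ Finv α} := hY measurableSet_Iic
  have hsetc : {ω | Y ω > Finv α} = {ω | Y ω ≤ Finv α}ᶜ := by
    ext ω; simp [not_le]
  have hPset : P {ω | Y ω > Finv α} = ENNReal.ofReal (1 - α) := by
    rw [hsetc, measure_compl hmeasY (measure_ne_top P _), PIic, hFinv α ⟨hα0, hα1⟩,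
      measure_univ, ← ENNReal.ofReal_one, ← ENNReal.ofReal_sub _ hα0.le]
  have hPsetR : (P {ω | Y ω > Finv α}).toReal = 1 - α := by
    rw [hPset, ENNReal.toReal_ofReal (by linarith)]
  -- the pushforward of P under F ∘ Y is uniform on (0,1)
  have hFY : Measurable fun ω => F (Y ω) := hFcont.measurable.comp hY
  have hmap : Measure.map (fun ω => F (Y ω)) P = volume.restrict (Ioo (0:ℝ) 1) := by
    refine Measure.ext_of_Iic _ _ (fun γ => ?_)
    rw [Measure.map_apply hFY measurableSet_Iic,
      Measure.restrict_apply' measurableSet_Ioo]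
    rcases le_or_gt γ 0 with hγ0 | hγ0
    · have h1 : (fun ω => F (Y ω)) ⁻¹' Iic γ = ∅ := by
        ext ω
        simp only [mem_preimage, mem_Iic, mem_empty_iff_false, iff_false, not_le]
        exact lt_of_le_of_lt hγ0 (hFrange (Y ω)).1
      have h2 : Iic γ ∩ Ioo (0:ℝ) 1 = ∅ := by
        ext x
        simp only [mem_inter_iff, mem_Iic, mem_Ioo, mem_empty_iff_false, iff_false, not_and]
        intro h hx; exact absurd (le_trans h hγ0) (not_le.2 hx)
      rw [h1, h2]; simp
    rcases le_or_gt 1 γ with hγ1 | hγ1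
    · have h1 : (fun ω => F (Y ω)) ⁻¹' Iic γ = univ := by
        ext ω
        simp only [mem_preimage, mem_Iic, mem_univ, iff_true]
        exact le_trans (hFrange (Y ω)).2.le hγ1
      have h2 : Iic γ ∩ Ioo (0:ℝ) 1 = Ioo 0 1 := by
        rw [inter_eq_right]
        exact fun x hx => le_trans hx.2.le hγ1
      rw [h1, h2, measure_univ, Real.volume_Ioo]
      norm_num
    · have hγ : γ ∈ Ioo (0:ℝ) 1 := ⟨hγ0, hγ1⟩
      have h1 : (fun ω => F (Y ω)) ⁻¹' Iic γ = {ω | Y ω ≤ Finv γ} := by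
        ext ω
        simp only [mem_preimage, mem_Iic, mem_setOf_eq]
        exact (hle (Y ω) γ hγ).symm
      have h2 : Iic γ ∩ Ioo (0:ℝ) 1 = Ioc 0 γ := by
        ext x
        simp only [mem_inter_iff, mem_Iic, mem_Ioo, mem_Ioc]
        exact ⟨fun h => ⟨h.2.1, h.1⟩, fun h => ⟨h.2, h.1, lt_of_le_of_lt h.2 hγ1⟩⟩
      rw [h1, h2, PIic, hFinv γ hγ, Real.volume_Ioc, sub_zero]
  -- monotonicity of Finv on (0,1)
  have hFinvMono : MonotoneOn Finv (Ioo (0:ℝ) 1) := by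
    intro a ha b hb hab
    rw [← hFmono.le_iff_le, hFinv a ha, hFinv b hb]; exact hab
  have hFinvAEM : AEStronglyMeasurable ((Ioo α 1).indicator Finv)
      (Measure.map (fun ω => F (Y ω)) P) := by
    rw [hmap]
    exact ((aemeasurable_restrict_of_monotoneOn measurableSet_Ioo
      hFinvMono).indicator measurableSet_Ioo).aestronglyMeasurable
  -- set identification
  have hsub : Ioo α 1 ⊆ Ioo (0:ℝ) 1 := Ioo_subset_Ioo hα0.le le_rfl
  have hseteq : {ω | Y ω > Finv α} = (fun ω => F (Y ω)) ⁻¹' Ioo α 1 := by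
    ext ω
    simp only [mem_setOf_eq, mem_preimage, mem_Ioo]
    exact ⟨fun h => ⟨(hlt (Y ω) α ⟨hα0, hα1⟩).1 h, (hFrange (Y ω)).2⟩,
      fun h => (hlt (Y ω) α ⟨hα0, hα1⟩).2 h.1⟩
  -- the integral identity
  have hint : ∫ γ in Ioo α 1, Finv γ = ∫ ω in {ω | Y ω > Finv α}, Y ω ∂P := by
    have s1 : ∫ γ in Ioo α 1, Finv γ
        = ∫ γ, (Ioo α 1).indicator Finv γ ∂(volume.restrict (Ioo (0:ℝ) 1)) := by
      rw [integral_indicator measurableSet_Ioo, Measure.restrict_restrict measurableSet_Ioo,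
        inter_eq_left.2 hsub]
    have s2 : ∫ γ, (Ioo α 1).indicator Finv γ ∂(volume.restrict (Ioo (0:ℝ) 1))
        = ∫ ω, (Ioo α 1).indicator Finv (F (Y ω)) ∂P := by
      rw [← hmap, integral_map hFY.aemeasurable hFinvAEM]
    have s3 : ∀ ω, (Ioo α 1).indicator Finv (F (Y ω))
        = {ω | Y ω > Finv α}.indicator Y ω := by
      intro ω
      by_cases h : F (Y ω) ∈ Ioo α 1
      · rw [indicator_of_mem h, indicator_of_mem (hseteq ▸ h), hFinvF]
      · rw [indicator_of_notMem h, indicator_of_notMem (by rwa [hseteq])]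
    rw [s1, s2]
    simp_rw [s3]
    rw [integral_indicator (by rw [hseteq]; exact hFY measurableSet_Ioo)]
  rw [hint, hPsetR]; ring
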